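/- Let n ≥ 1 and let F : ({0,1})^n → {0,1} be monotone, meaning that if s_i ≤ t_i for all i then F(s) ≤ F(t). For p ∈ [0,1] define f(p) = Σ_{s : F(s)=1} p^{|s|} (1−p)^{n−|s|}, where |s| = #{i : s_i = 1}. Then at least one of the following holds: (1) F is identically 0; (2) F is identically 1; or (3) for every p ∈ (0,1), p(1−p)·f'(p) ≥ f(p)·(1 − f(p)), where f' is the derivative of the polynomial f. -/
import Mathlib

/-- The probability that the Boolean function `F` equals `1` when each of the `n` input bits
is independently `1` with probability `p`. -/
noncomputable def boolAvg (n : ℕ) (F : (Fin n → Bool) → Bool) (p : ℝ) : ℝ :=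
  ∑ s : Fin n → Bool, if F s then
    p ^ (Finset.univ.filter fun i => s i = true).card *
      (1 - p) ^ (n - (Finset.univ.filter fun i => s i = true).card)
  else 0

lemma boolAvg_zero (F : (Fin 0 → Bool) → Bool) (q : ℝ) :
    boolAvg 0 F q = (if F (fun _ => false) then (1:ℝ) else 0) := by
  unfold boolAvg
  rw [Fintype.sum_eq_single (fun _ => false : Fin 0 → Bool)
    (fun x hx => absurd (Subsingleton.elim x _) hx)]
  norm_num

lemma boolAvg_succ (n : ℕ) (F : (Fin (n+1) → Bool) → Bool) (p : ℝ) :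
    boolAvg (n+1) F p = (1-p) * boolAvg n (fun t => F (Fin.cons false t)) p
      + p * boolAvg n (fun t => F (Fin.cons true t)) p := by
  have hle : ∀ t : Fin n → Bool, (Finset.univ.filter fun i => t i = true).card ≤ n := by
    intro t
    simpa using Finset.card_filter_le Finset.univ (fun i => t i = true)
  have hcard : ∀ (b : Bool) (t : Fin n → Bool),
      (Finset.univ.filter fun i => (Fin.cons b t : Fin (n+1) → Bool) i = true).card
        = (if b then 1 else 0) + (Finset.univ.filter fun i => t i = true).card := by
    intro b t
    rw [Finset.card_filter, Finset.card_filter, Fin.sum_univ_succ]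
    simp [Fin.cons_zero, Fin.cons_succ]
  unfold boolAvg
  rw [← ((Fin.consEquiv (fun _ => Bool)).sum_comp
    (fun s => if F s then p ^ (Finset.univ.filter fun i => s i = true).card *
      (1 - p) ^ (n + 1 - (Finset.univ.filter fun i => s i = true).card) else 0)),
    Fintype.sum_prod_type, Fintype.sum_bool, Finset.mul_sum, Finset.mul_sum, add_comm]
  congr 1
  · apply Finset.sum_congr rfl
    intro t _
    have h := hcard false t
    set k := (Finset.univ.filter fun i => t i = true).card with hk
    have hke : (Finset.univ.filter fun i => (Fin.consEquiv (fun _ => Bool)) (false, t) i = true).card = k := by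
      simpa using h
    rw [hke]
    have hkn : k ≤ n := hle t
    have : n + 1 - k = (n - k) + 1 := by omega
    rw [this]
    have hFe : (Fin.consEquiv (fun _ => Bool)) (false, t) = Fin.cons false t := rfl
    rw [hFe]
    split <;> ring
  · apply Finset.sum_congr rfl
    intro t _
    have h := hcard true t
    set k := (Finset.univ.filter fun i => t i = true).card with hk
    have hke : (Finset.univ.filter fun i => (Fin.consEquiv (fun _ => Bool)) (true, t) i = true).card = 1 + k := by
      simpa using h
    rw [hke]
    have hkn : k ≤ n := hle t
    have : n + 1 - (1 + k) = n - k := by omega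
    rw [this]
    have hFe : (Fin.consEquiv (fun _ => Bool)) (true, t) = Fin.cons true t := rfl
    rw [hFe]
    split <;> ring

lemma boolAvg_differentiable (n : ℕ) (F : (Fin n → Bool) → Bool) :
    Differentiable ℝ (boolAvg n F) := by
  show Differentiable ℝ fun p : ℝ => ∑ s : Fin n → Bool, if F s then
    p ^ (Finset.univ.filter fun i => s i = true).card *
      (1 - p) ^ (n - (Finset.univ.filter fun i => s i = true).card) else 0
  apply Differentiable.fun_sum
  intro s _
  by_cases hF : F s
  · simp only [hF, if_true]
    exact (differentiable_pow _).mul (((differentiable_const 1).sub differentiable_id).pow _)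
  · simp only [hF, if_false]
    exact differentiable_const 0

lemma boolAvg_nonneg (n : ℕ) (F : (Fin n → Bool) → Bool) (p : ℝ) (h0 : 0 ≤ p) (h1 : p ≤ 1) :
    0 ≤ boolAvg n F p := by
  apply Finset.sum_nonneg
  intro s _
  split
  · have : (0:ℝ) ≤ 1 - p := by linarith
    positivity
  · exact le_refl 0

lemma boolAvg_mono (n : ℕ) (F G : (Fin n → Bool) → Bool) (hFG : ∀ s, F s ≤ G s)
    (p : ℝ) (h0 : 0 ≤ p) (h1 : p ≤ 1) : boolAvg n F p ≤ boolAvg n G p := by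
  apply Finset.sum_le_sum
  intro s _
  have hw : (0:ℝ) ≤ p ^ (Finset.univ.filter fun i => s i = true).card *
      (1 - p) ^ (n - (Finset.univ.filter fun i => s i = true).card) := by
    have : (0:ℝ) ≤ 1 - p := by linarith
    positivity
  by_cases hFs : F s = true
  · have hGs : G s = true := by
      have h2 := hFG s
      rw [hFs] at h2
      exact eq_top_iff.mpr h2
    simp [hFs, hGs]
  · rw [if_neg hFs]
    split
    · exact hw
    · exact le_refl 0

lemma boolAvg_top (n : ℕ) (p : ℝ) : boolAvg n (fun _ => true) p = 1 := by
  induction n with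
  | zero =>
    rw [boolAvg_zero]
    rfl
  | succ m ih =>
    rw [boolAvg_succ, ih]
    ring

lemma boolAvg_le_one (n : ℕ) (F : (Fin n → Bool) → Bool) (p : ℝ) (h0 : 0 ≤ p) (h1 : p ≤ 1) :
    boolAvg n F p ≤ 1 := by
  have := boolAvg_mono n F (fun _ => true) (fun s => Bool.le_true _) p h0 h1
  rwa [boolAvg_top] at this

lemma key (n : ℕ) (F : (Fin n → Bool) → Bool)
    (hmono : ∀ s t : Fin n → Bool, (∀ i, s i ≤ t i) → F s ≤ F t) :
    ∀ p : ℝ, 0 < p → p < 1 →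
      boolAvg n F p * (1 - boolAvg n F p) ≤ p * (1 - p) * deriv (boolAvg n F) p := by
  induction n with
  | zero =>
    intro p hp hp1
    have hc : boolAvg 0 F = fun _ : ℝ => (if F (fun _ => false) then (1:ℝ) else 0) := by
      funext q
      exact boolAvg_zero F q
    rw [hc]
    rw [deriv_const]
    split <;> norm_num
  | succ m ih =>
    intro p hp hp1
    set F0 : (Fin m → Bool) → Bool := fun t => F (Fin.cons false t) with hF0
    set F1 : (Fin m → Bool) → Bool := fun t => F (Fin.cons true t) with hF1
    have hm0 : ∀ s t : Fin m → Bool, (∀ i, s i ≤ t i) → F0 s ≤ F0 t := by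
      intro s t h
      apply hmono
      intro i
      refine Fin.cases ?_ (fun j => ?_) i
      · exact le_refl _
      · exact h j
    have hm1 : ∀ s t : Fin m → Bool, (∀ i, s i ≤ t i) → F1 s ≤ F1 t := by
      intro s t h
      apply hmono
      intro i
      refine Fin.cases ?_ (fun j => ?_) i
      · exact le_refl _
      · exact h j
    have h01 : ∀ t, F0 t ≤ F1 t := by
      intro t
      apply hmono
      intro i
      refine Fin.cases ?_ (fun j => ?_) i
      · exact Bool.false_le _
      · exact le_refl _
    have hfun : boolAvg (m+1) F = fun q => (1-q) * boolAvg m F0 q + q * boolAvg m F1 q := by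
      funext q
      exact boolAvg_succ m F q
    set a := boolAvg m F0 p with ha
    set b := boolAvg m F1 p with hb
    set a' := deriv (boolAvg m F0) p with ha'
    set b' := deriv (boolAvg m F1) p with hb'
    have hda : HasDerivAt (boolAvg m F0) a' p :=
      (boolAvg_differentiable m F0 p).hasDerivAt
    have hdb : HasDerivAt (boolAvg m F1) b' p :=
      (boolAvg_differentiable m F1 p).hasDerivAt
    have hd1 : HasDerivAt (fun q : ℝ => 1 - q) (0 - 1) p :=
      (hasDerivAt_const p 1).sub (hasDerivAt_id p)
    have hD : HasDerivAt (boolAvg (m+1) F)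
        ((0-1) * a + (1-p) * a' + (1 * b + p * b')) p := by
      rw [hfun]
      exact (hd1.mul hda).add ((hasDerivAt_id p).mul hdb)
    have hDeq : deriv (boolAvg (m+1) F) p = (0-1) * a + (1-p) * a' + (1 * b + p * b') :=
      hD.deriv
    have hval : boolAvg (m+1) F p = (1-p) * a + p * b := boolAvg_succ m F p
    rw [hDeq, hval]
    have h1 : a * (1 - a) ≤ p * (1-p) * a' := ih F0 hm0 p hp hp1
    have h2 : b * (1 - b) ≤ p * (1-p) * b' := ih F1 hm1 p hp hp1
    have hab : a ≤ b := boolAvg_mono m F0 F1 h01 p hp.le hp1.le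
    have ha0 : 0 ≤ a := boolAvg_nonneg m F0 p hp.le hp1.le
    have hb1 : b ≤ 1 := boolAvg_le_one m F1 p hp.le hp1.le
    nlinarith [mul_le_mul_of_nonneg_left h1 (by linarith : (0:ℝ) ≤ 1 - p),
      mul_le_mul_of_nonneg_left h2 hp.le,
      mul_nonneg (mul_nonneg hp.le (by linarith : (0:ℝ) ≤ 1 - p))
        (mul_nonneg (by linarith : (0:ℝ) ≤ b - a) (by linarith : (0:ℝ) ≤ 1 - (b - a)))]

theorem stmt17 (n : ℕ) (hn : 1 ≤ n) (F : (Fin n → Bool) → Bool)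
    (hmono : ∀ s t : Fin n → Bool, (∀ i, s i ≤ t i) → F s ≤ F t) :
    (∀ s, F s = false) ∨ (∀ s, F s = true) ∨
      (∀ p : ℝ, 0 < p → p < 1 →
        boolAvg n F p * (1 - boolAvg n F p) ≤ p * (1 - p) * deriv (boolAvg n F) p) := by
  exact Or.inr (Or.inr (key n F hmono))
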